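/- Let n ≥ 2 be an even natural number, Ω > 0, ζ₀ > 0, and let x = (x₁, x₂) : [ζ₀, ∞) → ℝ² be a solution of the shifted even system. Then the function ζ ↦ V(x₁(ζ), x₂(ζ)) is differentiable on [ζ₀, ∞) with derivative equal to −4·x₂(ζ)²/ζ; in particular, ζ ↦ V(x(ζ)) is nonincreasing. -/

import Mathlib

/-- A solution on [ζ₀, ∞) of the shifted even system arising from the
generalized Lane–Emden equation with γ = 1 + 1/n: x₁′ = x₂,
x₂′ = (1/(n+1))·(Ω·(x₁ − Ω^{−1/n})ⁿ − 1) − 2x₂/ζ. -/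
def IsSolShiftedEven (n : ℕ) (Ω ζ₀ : ℝ) (x₁ x₂ : ℝ → ℝ) : Prop :=
  ∀ ζ ∈ Set.Ici ζ₀,
    HasDerivWithinAt x₁ (x₂ ζ) (Set.Ici ζ₀) ζ ∧
    HasDerivWithinAt x₂
      ((1 / ((n : ℝ) + 1)) * (Ω * (x₁ ζ - Ω ^ (-1 / (n : ℝ))) ^ n - 1)
        - 2 * x₂ ζ / ζ)
      (Set.Ici ζ₀) ζ

/-- The Lyapunov function
V(x₁,x₂) = −(2Ω/(n+1)²)((x₁ − Ω^{−1/n})^{n+1} + Ω^{−(n+1)/n}) + (2/(n+1))x₁ + x₂². -/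
noncomputable def lyapV (n : ℕ) (Ω : ℝ) (x₁ x₂ : ℝ) : ℝ :=
  -(2 * Ω / ((n : ℝ) + 1) ^ 2) *
      ((x₁ - Ω ^ (-1 / (n : ℝ))) ^ (n + 1) + Ω ^ (-((n : ℝ) + 1) / (n : ℝ)))
    + (2 / ((n : ℝ) + 1)) * x₁ + x₂ ^ 2

/-! The gradient of `V` is `((2/(n+1)) (1 - Ω (x₁ - Ω^{-1/n})ⁿ), 2 x₂)`, which is orthogonal to
the autonomous part `(x₂, (Ω (x₁ - Ω^{-1/n})ⁿ - 1)/(n+1))` of the vector field: `V` is a first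
integral of the undamped system. Along a solution only the damping term `-2x₂/ζ` contributes,
so `dV/dζ = 2x₂ · (-2x₂/ζ) ≤ 0` for `ζ > 0`. -/

theorem Convex.antitoneOn_of_hasDerivWithinAt_nonpos {D : Set ℝ} (hD : Convex ℝ D)
    {f f' : ℝ → ℝ} (hf : ∀ x ∈ D, HasDerivWithinAt f (f' x) D x)
    (hf'₀ : ∀ x ∈ interior D, f' x ≤ 0) : AntitoneOn f D :=
  _root_.antitoneOn_of_hasDerivWithinAt_nonpos hD (fun x hx ↦ (hf x hx).continuousWithinAt)
    (fun x hx ↦ (hf x (interior_subset hx)).mono interior_subset) hf'₀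

theorem HasDerivWithinAt.lyapV {n : ℕ} {Ω : ℝ} {x₁ x₂ : ℝ → ℝ} {a b t : ℝ} {s : Set ℝ}
    (h₁ : HasDerivWithinAt x₁ a s t) (h₂ : HasDerivWithinAt x₂ b s t) :
    HasDerivWithinAt (fun τ ↦ lyapV n Ω (x₁ τ) (x₂ τ))
      (2 / ((n : ℝ) + 1) * (1 - Ω * (x₁ t - Ω ^ (-1 / (n : ℝ))) ^ n) * a + 2 * x₂ t * b)
      s t := by
  have hpow := (h₁.sub_const (Ω ^ (-1 / (n : ℝ)))).fun_pow (n + 1)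
  refine ((((hpow.add_const _).const_mul _).fun_add (h₁.const_mul _)).fun_add
    (h₂.fun_pow 2)).congr_deriv ?_
  field_simp
  push_cast
  ring

theorem laneEmden_lyapunov_derivative
    (n : ℕ) (Ω ζ₀ : ℝ) (hζ₀ : 0 < ζ₀)
    (x₁ x₂ : ℝ → ℝ) (hx : IsSolShiftedEven n Ω ζ₀ x₁ x₂) :
    (∀ ζ ∈ Set.Ici ζ₀,
      HasDerivWithinAt (fun s : ℝ => lyapV n Ω (x₁ s) (x₂ s))
        (-4 * x₂ ζ ^ 2 / ζ) (Set.Ici ζ₀) ζ) ∧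
    AntitoneOn (fun s : ℝ => lyapV n Ω (x₁ s) (x₂ s)) (Set.Ici ζ₀) := by
  have hderiv : ∀ ζ ∈ Set.Ici ζ₀,
      HasDerivWithinAt (fun s : ℝ => lyapV n Ω (x₁ s) (x₂ s))
        (-4 * x₂ ζ ^ 2 / ζ) (Set.Ici ζ₀) ζ := fun ζ hζ ↦
    ((hx ζ hζ).1.lyapV (hx ζ hζ).2).congr_deriv (by field_simp; ring)
  refine ⟨hderiv, (convex_Ici ζ₀).antitoneOn_of_hasDerivWithinAt_nonpos hderiv ?_⟩
  rw [interior_Ici]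
  intro ζ hζ
  exact div_nonpos_of_nonpos_of_nonneg (by linarith [sq_nonneg (x₂ ζ)]) (hζ₀.trans hζ).le
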